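/- arXiv:2212.02843 — 2 statements merged into one kernel-verified Lean document; each statement's English description precedes it below -/
import Mathlib

section
/- For every progressive class U of ordinals, if every ordinal below β lies in the jump U^J, then every ordinal below ω^β lies in U, and moreover ω^β ∈ U. -/
open Ordinal

def Progressive (U : Ordinal → Prop) : Prop :=
  ∀ α : Ordinal, (∀ γ < α, U γ) → U α

def Jump (U : Ordinal → Prop) (β : Ordinal) : Prop :=
  ∀ α : Ordinal, (∀ γ < α, U γ) → ∀ γ < α + (ω : Ordinal) ^ β, U γ

/-!
A nonzero `δ < ω ^ β` lies below `ω ^ (g + 1) = ω ^ g * ω` for `g = log ω δ < β`, hence below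
`ω ^ g * n` for some natural `n`. Starting from `α = 0`, `n` applications of `g ∈ U^J` show
that everything below `ω ^ g * n` is in `U`; progressiveness supplies `0 ∈ U` and `ω ^ β ∈ U`.
-/

theorem Jump.forall_lt_opow_mul_natCast {U : Ordinal → Prop} {γ : Ordinal} (h : Jump U γ) :
    ∀ n : ℕ, ∀ x < ω ^ γ * n, U x
  | 0, x, hx => absurd hx (by simp)
  | n + 1, x, hx =>
    h _ (forall_lt_opow_mul_natCast h n) x (by rwa [Nat.cast_succ, mul_add_one] at hx)

theorem Jump.forall_lt_opow_succ {U : Ordinal → Prop} {γ : Ordinal} (h : Jump U γ) :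
    ∀ x < ω ^ Order.succ γ, U x := by
  intro x hx
  rw [opow_succ, lt_mul_iff_of_isSuccLimit isSuccLimit_omega0] at hx
  obtain ⟨c, hc, hxc⟩ := hx
  obtain ⟨n, rfl⟩ := lt_omega0.mp hc
  exact h.forall_lt_opow_mul_natCast n x hxc

/-- If `U` is progressive and every ordinal below `β` is in `U^J`, then every
ordinal below `ω^β` is in `U`, and moreover `ω^β ∈ U`. -/
theorem jump_below_opow (U : Ordinal → Prop) (β : Ordinal)
    (hU : Progressive U) (hβ : ∀ γ < β, Jump U γ) :
    (∀ δ < (ω : Ordinal) ^ β, U δ) ∧ U ((ω : Ordinal) ^ β) := by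
  have below : ∀ δ < (ω : Ordinal) ^ β, U δ := by
    intro δ hδ
    rcases eq_or_ne δ 0 with rfl | hδ0
    · exact hU 0 fun _ hγ => (not_lt_zero hγ).elim
    · have hlog : log ω δ < β := (lt_opow_iff_log_lt one_lt_omega0 hδ0).mp hδ
      exact (hβ _ hlog).forall_lt_opow_succ δ (lt_opow_succ_log_self one_lt_omega0 δ)
  exact ⟨below, hU _ below⟩
end

section
/- Transfinite induction up to ω^β follows from transfinite induction up to β via the jump: for any family of classes, if for every class U, progressiveness of U implies all ordinals < β are in U^J, then for every progressive class V, all ordinals < ω^β are in V. -/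
/-
Every nonzero `δ < ω^β` lies below `ω^γ * n` for some `γ < β` (namely `γ = log ω δ`) and some
finite `n`. Starting from the empty initial segment and applying the jump `U^J ∋ γ` a total of
`n` times shows that a progressive `U` contains everything below `ω^γ * n`.
-/

open Ordinal

theorem Jump.forall_lt_add_opow_mul {U : Ordinal → Prop} {γ : Ordinal} (hJ : Jump U γ)
    {α : Ordinal} (hα : ∀ x < α, U x) (n : ℕ) : ∀ x < α + ω ^ γ * n, U x := by
  induction n with
  | zero => simpa using hα
  | succ n ih =>
    intro x hx
    refine hJ _ ih x ?_
    rwa [Nat.cast_succ, mul_add_one, ← add_assoc] at hx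

theorem exists_lt_opow_omega0_mul_natCast {β δ : Ordinal} (hδ0 : δ ≠ 0) (hδ : δ < ω ^ β) :
    ∃ γ < β, ∃ n : ℕ, δ < ω ^ γ * n := by
  refine ⟨log ω δ, (lt_opow_iff_log_lt one_lt_omega0 hδ0).mp hδ, ?_⟩
  have hδω : δ < ω ^ log ω δ * ω := by
    rw [← opow_succ]
    exact lt_opow_succ_log_self one_lt_omega0 δ
  obtain ⟨c, hc, hδc⟩ := (lt_mul_iff_of_isSuccLimit isSuccLimit_omega0).mp hδω
  obtain ⟨n, rfl⟩ := lt_omega0.mp hc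
  exact ⟨n, hδc⟩

/-- Transfinite induction up to `ω^β` follows from transfinite induction up to
`β` via the jump. -/
theorem TI_opow_of_TI_jump (β : Ordinal)
    (h : ∀ U : Ordinal → Prop, Progressive U → ∀ γ < β, Jump U γ) :
    ∀ V : Ordinal → Prop, Progressive V → ∀ δ < (ω : Ordinal) ^ β, V δ := by
  intro V hV δ hδ
  have hV_lt_zero : ∀ x < (0 : Ordinal), V x := fun _ hx => (not_lt_zero hx).elim
  rcases eq_or_ne δ 0 with rfl | hδ0
  · exact hV 0 hV_lt_zero
  obtain ⟨γ, hγ, n, hδn⟩ := exists_lt_opow_omega0_mul_natCast hδ0 hδ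
  exact (h V hV γ hγ).forall_lt_add_opow_mul hV_lt_zero n δ (by rwa [zero_add])
end
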